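/- arXiv:1405.0730 — 6 statements merged into one kernel-verified Lean document; each statement's English description precedes it below -/
import Mathlib

section
/- Let A be a ring and I a two-sided ideal with I^k = 0. If A/I satisfies the Capelli identity c_m with m odd, then A satisfies the Capelli identity c_{km}. -/
/-!
Let `H ≅ (S_m)^k` be the subgroup of `S_{km}` permuting each of `k` consecutive blocks of
length `m` separately. Splitting the sum defining `c_{km}` along the left cosets `τH`, the part
over one coset factors, up to the sign of `τ`, as a product of `k` evaluations of `c_m`, one per
block. Each factor lies in `I`, so each product of `k` of them vanishes.
-/

open Finset

/-- The evaluation of the Capelli polynomial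
`c_m(x₁,…,x_m; y₁,…,y_m) = Σ_{π ∈ S_m} sgn(π) x_{π(1)} y₁ ⋯ x_{π(m)} y_m` on a ring. -/
def capelliEval {A : Type*} [Ring A] (m : ℕ) (x y : Fin m → A) : A :=
  ∑ π : Equiv.Perm (Fin m), (Equiv.Perm.sign π : ℤ) • (List.ofFn (fun i => x (π i) * y i)).prod

open Equiv

theorem List.prod_ofFn_smul {R A : Type*} [CommMonoid R] [Monoid A] [MulAction R A]
    [IsScalarTower R A A] [SMulCommClass R A A] :
    ∀ {k : ℕ} (c : Fin k → R) (a : Fin k → A),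
      (List.ofFn fun b => c b • a b).prod = (∏ b, c b) • (List.ofFn a).prod
  | 0, _, _ => by simp
  | _ + 1, c, a => by
    rw [List.ofFn_succ, List.ofFn_succ, List.prod_cons, List.prod_cons, List.prod_ofFn_smul,
      Fin.prod_univ_succ, smul_mul_assoc, mul_smul_comm, smul_smul]

theorem List.prod_ofFn_sum {A S : Type*} [Semiring A] [Fintype S] :
    ∀ {k : ℕ} (F : Fin k → S → A),
      (List.ofFn fun b => ∑ s, F b s).prod =
        ∑ σ : Fin k → S, (List.ofFn fun b => F b (σ b)).prod
  | 0, _ => by simp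
  | _ + 1, F => by
    rw [List.ofFn_succ, List.prod_cons, List.prod_ofFn_sum, Finset.sum_mul_sum,
      ← Fintype.sum_prod_type', ← (Fin.consEquiv fun _ => S).sum_comp]
    simp [List.ofFn_succ]

theorem List.prod_ofFn_finProdFinEquiv {M : Type*} [Monoid M] {k m : ℕ} (f : Fin (k * m) → M) :
    (List.ofFn f).prod =
      (List.ofFn fun b => (List.ofFn fun i => f (finProdFinEquiv (b, i))).prod).prod := by
  rw [List.ofFn_mul, List.prod_flatten, List.map_ofFn]
  refine congrArg List.prod (List.ofFn_inj.mpr (funext fun b => ?_))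
  refine congrArg List.prod (List.ofFn_inj.mpr (funext fun i => congrArg f (Fin.ext ?_)))
  simp [add_comm, mul_comm]

theorem MonoidHom.sum_eq_sum_quotient_range {G K M : Type*} [Group G] [Group K] [Fintype G]
    [Fintype K] [AddCommMonoid M] (φ : K →* G) (hφ : Function.Injective φ)
    [Fintype (G ⧸ φ.range)] (f : G → M) :
    ∑ g, f g = ∑ q : G ⧸ φ.range, ∑ σ, f (q.out * φ σ) := by
  have hmk (q : G ⧸ φ.range) (σ : K) : ((q.out * φ σ : G) : G ⧸ φ.range) = q := by
    rw [QuotientGroup.mk_mul_of_mem _ (φ.mem_range.mpr ⟨σ, rfl⟩), QuotientGroup.out_eq']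
  have hbij : Function.Bijective fun p : (G ⧸ φ.range) × K => p.1.out * φ p.2 := by
    refine ⟨fun ⟨q, σ⟩ ⟨q', σ'⟩ h => ?_, fun g => ?_⟩
    · obtain rfl : q = q' := by rw [← hmk q σ, ← hmk q' σ']; exact congrArg _ h
      exact Prod.ext rfl (hφ (mul_left_cancel h))
    · obtain ⟨σ, hσ⟩ : (g : G ⧸ φ.range).out⁻¹ * g ∈ φ.range :=
        QuotientGroup.leftRel_apply.mp (Quotient.exact' (QuotientGroup.out_eq' _))
      exact ⟨(g, σ), by simp [hσ]⟩
  rw [← Fintype.sum_prod_type', Fintype.sum_bijective _ hbij _ f fun _ => rfl]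

def Equiv.Perm.prodCongrRightHom (α β : Type*) : (α → Perm β) →* Perm (α × β) where
  toFun := Equiv.prodCongrRight
  map_one' := by ext <;> simp
  map_mul' _ _ := by ext <;> simp

theorem Equiv.Perm.prodCongrRightHom_injective (α β : Type*) :
    Function.Injective (Perm.prodCongrRightHom α β) := fun σ τ h => by
  funext a
  ext b
  simpa [Perm.prodCongrRightHom] using DFunLike.congr_fun h (a, b)

/-- `σ b` permutes the `b`-th block `{b * m, …, b * m + m - 1}` of `Fin (k * m)`. -/
def blockPerm (k m : ℕ) : (Fin k → Perm (Fin m)) →* Perm (Fin (k * m)) :=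
  finProdFinEquiv.permCongrHom.toMonoidHom.comp (Perm.prodCongrRightHom _ _)

section blockPerm

variable {k m : ℕ}

theorem blockPerm_apply (σ : Fin k → Perm (Fin m)) (b : Fin k) (i : Fin m) :
    blockPerm k m σ (finProdFinEquiv (b, i)) = finProdFinEquiv (b, σ b i) := by
  simp [blockPerm, Perm.prodCongrRightHom]

theorem sign_blockPerm (σ : Fin k → Perm (Fin m)) :
    Perm.sign (blockPerm k m σ) = ∏ b, Perm.sign (σ b) := by
  simp [blockPerm, Perm.prodCongrRightHom, Perm.sign_permCongr, Perm.sign_prodCongrRight]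

theorem blockPerm_injective : Function.Injective (blockPerm k m) :=
  finProdFinEquiv.permCongrHom.injective.comp (Perm.prodCongrRightHom_injective _ _)

theorem sum_blockPerm_coset_eq_prod_capelliEval {A : Type*} [Ring A] (x y : Fin (k * m) → A)
    (τ : Perm (Fin (k * m))) :
    ∑ σ, (Perm.sign (τ * blockPerm k m σ) : ℤ) •
        (List.ofFn fun i => x ((τ * blockPerm k m σ) i) * y i).prod =
      (Perm.sign τ : ℤ) • (List.ofFn fun b =>
        capelliEval m (fun j => x (τ (finProdFinEquiv (b, j))))
          (fun i => y (finProdFinEquiv (b, i)))).prod := by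
  calc _ = ∑ σ : Fin k → Perm (Fin m), (Perm.sign τ : ℤ) • (List.ofFn fun b =>
          (Perm.sign (σ b) : ℤ) • (List.ofFn fun i =>
            x (τ (finProdFinEquiv (b, σ b i))) * y (finProdFinEquiv (b, i))).prod).prod := by
        refine sum_congr rfl fun σ _ => ?_
        rw [List.prod_ofFn_smul, smul_smul, List.prod_ofFn_finProdFinEquiv, map_mul,
          sign_blockPerm]
        simp [blockPerm_apply]
    _ = _ := by simp only [← smul_sum, capelliEval, List.prod_ofFn_sum]

end blockPerm

theorem stmt_4_general (A : Type*) [Ring A] (I : TwoSidedIdeal A) (k m : ℕ)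
    (hI : ∀ f : Fin k → A, (∀ i, f i ∈ I) → (List.ofFn f).prod = 0)
    (hquot : ∀ x y : Fin m → A, capelliEval m x y ∈ I) :
    ∀ x y : Fin (k * m) → A, capelliEval (k * m) x y = 0 := by
  classical
  intro x y
  rw [capelliEval, (blockPerm k m).sum_eq_sum_quotient_range blockPerm_injective]
  refine sum_eq_zero fun q _ => ?_
  rw [sum_blockPerm_coset_eq_prod_capelliEval, hI _ fun b => hquot _ _, smul_zero]

/-- Let `A` be a ring and `I` a two-sided ideal with `I^k = 0`.  If `A/I` satisfies the
Capelli identity `c_m` with `m` odd (i.e. every evaluation of `c_m` on `A` lies in `I`),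
then `A` satisfies the Capelli identity `c_{km}`. -/
theorem stmt_4 (A : Type*) [Ring A] (I : TwoSidedIdeal A) (k m : ℕ) (hk : 0 < k)
    (hI : ∀ f : Fin k → A, (∀ i, f i ∈ I) → (List.ofFn f).prod = 0)
    (hm : Odd m)
    (hquot : ∀ x y : Fin m → A, capelliEval m x y ∈ I) :
    ∀ x y : Fin (k * m) → A, capelliEval (k * m) x y = 0 :=
  stmt_4_general A I k m hI hquot
end

section
/- Let A be a ring and I a two-sided ideal with I^k = 0. If A/I satisfies the Capelli identity c_m, then A satisfies the Capelli identity c_{k(m+1)}. -/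
open Finset

/-! Laplace expansion: grouping the permutations of `Fin (a + b)` into left cosets of the block
subgroup `S_a × S_b` writes `c_{a+b}` as a signed sum of products `c_a(…) · c_b(…)`. With `b = 1`
this shows that `c_{m+1}` takes values in `I` because `c_m` does; with `a = (m+1)j, b = m+1` it
shows inductively that `c_{(m+1)j}` takes values in `J ^ j`, where `J` is the additive span of `I`.
Since products of `k` elements of `I` vanish, `J ^ k = 0`. -/

open Equiv Equiv.Perm

theorem QuotientGroup.mk_out_mul {G : Type*} [Group G] {H : Subgroup G} (q : G ⧸ H) (h : H) :
    (QuotientGroup.mk (q.out * h) : G ⧸ H) = q := by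
  rw [QuotientGroup.mk_mul_of_mem _ h.2, QuotientGroup.out_eq']

theorem QuotientGroup.bijective_out_mul {G : Type*} [Group G] (H : Subgroup G) :
    Function.Bijective fun p : (G ⧸ H) × H => p.1.out * p.2 := by
  refine ⟨fun ⟨q, h⟩ ⟨q', h'⟩ he => ?_, fun g => ⟨(g, ⟨(g : G ⧸ H).out⁻¹ * g, ?_⟩), ?_⟩⟩
  · obtain rfl : q = q' := by simpa only [mk_out_mul] using congrArg ((↑) : G → G ⧸ H) he
    simpa using he
  · exact QuotientGroup.eq.mp (QuotientGroup.out_eq' _)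
  · simp

section CosetSum

variable {G M : Type*} [Group G] [Fintype G] [AddCommMonoid M]

theorem Fintype.sum_eq_sum_quotient_sum_subgroup (H : Subgroup G) [Fintype (G ⧸ H)] [Fintype H]
    (f : G → M) : ∑ g, f g = ∑ q : G ⧸ H, ∑ h : H, f (q.out * h) := by
  rw [← Fintype.sum_prod_type']
  exact (Fintype.sum_bijective _ (QuotientGroup.bijective_out_mul H) _ _ fun _ => rfl).symm

theorem Fintype.sum_eq_sum_quotient_sum_range {K : Type*} [Group K] [Fintype K] {φ : K →* G}
    (hφ : Function.Injective φ) [Fintype (G ⧸ φ.range)] (f : G → M) :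
    ∑ g, f g = ∑ q : G ⧸ φ.range, ∑ k, f (q.out * φ k) := by
  classical
  rw [Fintype.sum_eq_sum_quotient_sum_subgroup φ.range]
  exact Finset.sum_congr rfl fun q _ =>
    (Fintype.sum_equiv (MonoidHom.ofInjective hφ).toEquiv _ _ fun _ => rfl).symm

end CosetSum

theorem List.prod_ofFn_add {M : Type*} [Monoid M] {a b : ℕ} (f : Fin (a + b) → M) :
    (List.ofFn f).prod =
      (List.ofFn fun i => f (Fin.castAdd b i)).prod * (List.ofFn fun i => f (Fin.natAdd a i)).prod := by
  rw [List.ofFn_add, List.prod_append]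
  rfl

namespace Equiv.Perm

def blockHom (a b : ℕ) : Perm (Fin a) × Perm (Fin b) →* Perm (Fin (a + b)) :=
  finSumFinEquiv.permCongrHom.toMonoidHom.comp (sumCongrHom (Fin a) (Fin b))

variable {a b : ℕ} (p : Perm (Fin a) × Perm (Fin b))

@[simp]
theorem blockHom_apply_castAdd (i : Fin a) :
    blockHom a b p (Fin.castAdd b i) = Fin.castAdd b (p.1 i) := by
  simp [blockHom, sumCongrHom]

@[simp]
theorem blockHom_apply_natAdd (i : Fin b) :
    blockHom a b p (Fin.natAdd a i) = Fin.natAdd a (p.2 i) := by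
  simp [blockHom, sumCongrHom]

@[simp]
theorem sign_blockHom : sign (blockHom a b p) = sign p.1 * sign p.2 := by
  simp [blockHom, sumCongrHom, sign_permCongr]

theorem blockHom_injective : Function.Injective (blockHom a b) :=
  finSumFinEquiv.permCongrHom.injective.comp sumCongrHom_injective

end Equiv.Perm

section Capelli

variable {A : Type*} [Ring A]

@[simp]
theorem capelliEval_zero (x y : Fin 0 → A) : capelliEval 0 x y = 1 := by
  simp [capelliEval]

open scoped Classical in
theorem capelliEval_add (a b : ℕ) (x y : Fin (a + b) → A) :
    capelliEval (a + b) x y = ∑ q : Perm (Fin (a + b)) ⧸ (blockHom a b).range,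
      (sign q.out : ℤ) • (capelliEval a (x ∘ q.out ∘ Fin.castAdd b) (y ∘ Fin.castAdd b) *
        capelliEval b (x ∘ q.out ∘ Fin.natAdd a) (y ∘ Fin.natAdd a)) := by
  rw [capelliEval, Fintype.sum_eq_sum_quotient_sum_range blockHom_injective]
  refine Finset.sum_congr rfl fun q _ => ?_
  rw [capelliEval, capelliEval, Finset.sum_mul_sum, Finset.smul_sum, Fintype.sum_prod_type]
  refine Finset.sum_congr rfl fun τ₁ _ => ?_
  rw [Finset.smul_sum]
  refine Finset.sum_congr rfl fun τ₂ _ => ?_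
  simp only [List.prod_ofFn_add, Perm.coe_mul, Function.comp_apply, blockHom_apply_castAdd,
    blockHom_apply_natAdd, map_mul, sign_blockHom, smul_mul_smul_comm, smul_smul, Units.val_mul]

theorem capelliEval_succ_mem {I : TwoSidedIdeal A} {m : ℕ}
    (hI : ∀ x y : Fin m → A, capelliEval m x y ∈ I) (x y : Fin (m + 1) → A) :
    capelliEval (m + 1) x y ∈ I := by
  classical
  rw [capelliEval_add]
  exact sum_mem fun q _ => zsmul_mem (I.mul_mem_right _ _ (hI _ _)) _

theorem capelliEval_mul_mem_pow {J : Submodule ℤ A} {n : ℕ}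
    (hJ : ∀ x y : Fin n → A, capelliEval n x y ∈ J) (j : ℕ) (x y : Fin (n * j) → A) :
    capelliEval (n * j) x y ∈ J ^ j := by
  classical
  induction j with
  | zero =>
    change capelliEval 0 x y ∈ J ^ 0
    rw [capelliEval_zero, pow_zero]
    exact Submodule.mem_one.mpr ⟨1, map_one _⟩
  | succ j ih =>
    change capelliEval (n * j + n) x y ∈ J ^ (j + 1)
    rw [capelliEval_add, pow_succ]
    exact sum_mem fun q _ => zsmul_mem (Submodule.mul_mem_mul (ih _ _) (hJ _ _)) _

end Capelli

theorem TwoSidedIdeal.span_int_pow_eq_bot {A : Type*} [Ring A] (I : TwoSidedIdeal A) {k : ℕ}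
    (hI : ∀ f : Fin k → A, (∀ i, f i ∈ I) → (List.ofFn f).prod = 0) :
    Submodule.span ℤ (I : Set A) ^ k = ⊥ := by
  rw [Submodule.span_pow, Submodule.span_eq_bot]
  intro a ha
  obtain ⟨f, rfl⟩ := Set.mem_pow.mp ha
  exact hI _ fun i => (f i).2

theorem stmt_5_general (A : Type*) [Ring A] (I : TwoSidedIdeal A) (k m : ℕ)
    (hI : ∀ f : Fin k → A, (∀ i, f i ∈ I) → (List.ofFn f).prod = 0)
    
    (hquot : ∀ x y : Fin m → A, capelliEval m x y ∈ I) :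
    ∀ x y : Fin (k * (m + 1)) → A, capelliEval (k * (m + 1)) x y = 0 := by
  rw [Nat.mul_comm]
  intro x y
  have hmem := capelliEval_mul_mem_pow (J := Submodule.span ℤ (I : Set A))
    (fun x y => Submodule.subset_span (capelliEval_succ_mem hquot x y)) k x y
  rwa [I.span_int_pow_eq_bot hI, Submodule.mem_bot] at hmem

/-- Let `A` be a ring and `I` a two-sided ideal with `I^k = 0`.  If `A/I` satisfies the
Capelli identity `c_m` (i.e. every evaluation of `c_m` on `A` lies in `I`),
then `A` satisfies the Capelli identity `c_{k(m+1)}`. -/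
theorem stmt_5 (A : Type*) [Ring A] (I : TwoSidedIdeal A) (k m : ℕ) (hk : 0 < k)
    (hI : ∀ f : Fin k → A, (∀ i, f i ∈ I) → (List.ofFn f).prod = 0)
    
    (hquot : ∀ x y : Fin m → A, capelliEval m x y ∈ I) :
    ∀ x y : Fin (k * (m + 1)) → A, capelliEval (k * (m + 1)) x y = 0 :=
  stmt_5_general A I k m hI hquot
end

section
/- Any nil subring of the n×n matrix algebra over a field is nilpotent of nilpotence index at most n. -/
/-! Levitzki's argument. Let `S` be a multiplicative semigroup of nilpotent endomorphisms of a
finite-dimensional space `V` and `a ≠ 0` an element of `S` of minimal rank. If `a d a ≠ 0` for some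
`d ∈ S ∪ {1}`, minimality forces `range (a d a) = range a`, so the nilpotent `a d` maps `range a`
onto itself, which is impossible. Hence `a S a = 0` and `a² = 0`, so
`{v | a v = 0 ∧ ∀ s ∈ S, a (s v) = 0}` is a nonzero proper `S`-invariant subspace, and induction on
the dimension yields a nonzero vector killed by all of `S`. Applied to the quotients of `V` by the
joint kernels of `S ^ j`, this shows that these kernels grow strictly until they exhaust `V`, so
`S ^ (dim V) = 0`. -/

open Module Pointwise

theorem Submodule.eq_bot_of_map_eq_self_of_isNilpotent {R M : Type*} [Semiring R]
    [AddCommMonoid M] [Module R M] {f : End R M} (hf : IsNilpotent f) {W : Submodule R M}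
    (hW : W.map f = W) : W = ⊥ := by
  obtain ⟨k, hk⟩ := hf
  have hpow : ∀ j : ℕ, W.map (f ^ j) = W := by
    intro j
    induction j with
    | zero => exact Submodule.map_id W
    | succ j ih => rw [pow_succ, End.mul_eq_comp, Submodule.map_comp, hW, ih]
  rw [← hpow k, hk, Submodule.map_zero]

namespace Module.End

variable {K V : Type*} [Field K] [AddCommGroup V] [Module K V]

def jointKer (s : Set (End K V)) : Submodule K V := ⨅ g ∈ s, LinearMap.ker g

theorem mem_jointKer {s : Set (End K V)} {v : V} : v ∈ jointKer s ↔ ∀ g ∈ s, g v = 0 := by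
  simp [jointKer, Submodule.mem_iInf]

theorem mem_jointKer_pow_succ {s : Set (End K V)} {j : ℕ} {v : V} :
    v ∈ jointKer (s ^ (j + 1)) ↔ ∀ f ∈ s, f v ∈ jointKer (s ^ j) := by
  simp only [mem_jointKer, pow_succ, Set.mem_mul]
  constructor
  · intro h f hf g hg
    exact h _ ⟨g, hg, f, hf, rfl⟩
  · rintro h _ ⟨g, hg, f, hf, rfl⟩
    exact h f hf g hg

theorem jointKer_pow_le_succ (s : Set (End K V)) (j : ℕ) :
    jointKer (s ^ j) ≤ jointKer (s ^ (j + 1)) := by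
  intro v hv
  simp only [mem_jointKer, pow_succ', Set.mem_mul] at hv ⊢
  rintro _ ⟨f, -, g, hg, rfl⟩
  rw [mul_apply, hv g hg, map_zero]

end Module.End

namespace Subsemigroup

open End

variable {K V : Type*} [Field K] [AddCommGroup V] [Module K V]

section Induced

variable (S : Subsemigroup (End K V)) (W : Submodule K V) (hW : ∀ f ∈ S, W ≤ W.comap f)

def restrictEnd : Subsemigroup (End K W) where
  carrier := {g | ∃ f, ∃ hf : f ∈ S, g = f.restrict (hW f hf)}
  mul_mem' := by
    rintro _ _ ⟨f, hf, rfl⟩ ⟨g, hg, rfl⟩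
    exact ⟨f * g, S.mul_mem hf hg, rfl⟩

def mapQEnd : Subsemigroup (End K (V ⧸ W)) where
  carrier := {g | ∃ f, ∃ hf : f ∈ S, g = W.mapQ W f (hW f hf)}
  mul_mem' := by
    rintro _ _ ⟨f, hf, rfl⟩ ⟨g, hg, rfl⟩
    exact ⟨f * g, S.mul_mem hf hg, (W.mapQ_comp W W g f (hW g hg) (hW f hf)).symm⟩

variable {S}

theorem isNilpotent_of_mem_restrictEnd (hS : ∀ f ∈ S, IsNilpotent f) :
    ∀ g ∈ S.restrictEnd W hW, IsNilpotent g := by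
  rintro _ ⟨f, hf, rfl⟩
  exact End.isNilpotent.restrict _ (hS f hf)

theorem isNilpotent_of_mem_mapQEnd (hS : ∀ f ∈ S, IsNilpotent f) :
    ∀ g ∈ S.mapQEnd W hW, IsNilpotent g := by
  rintro _ ⟨f, hf, rfl⟩
  exact End.IsNilpotent.mapQ _ (hS f hf)

end Induced

variable [FiniteDimensional K V] {S : Subsemigroup (End K V)}

theorem mul_mul_eq_zero_of_finrank_range_le (hS : ∀ f ∈ S, IsNilpotent f) {a : End K V}
    (ha : a ≠ 0)
    (hmin : ∀ b ∈ S, b ≠ 0 → finrank K (LinearMap.range a) ≤ finrank K (LinearMap.range b))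
    {d : End K V} (had : a * d ∈ S) (hada : a * d * a ∈ S) : a * d * a = 0 := by
  by_contra hne
  have hrange : LinearMap.range (a * d * a) = LinearMap.range a :=
    Submodule.eq_of_le_of_finrank_le (by
      rw [mul_assoc, End.mul_eq_comp]; exact LinearMap.range_comp_le_range _ _)
      (hmin _ hada hne)
  rw [End.mul_eq_comp, LinearMap.range_comp] at hrange
  exact ha (LinearMap.range_eq_bot.mp
    (Submodule.eq_bot_of_map_eq_self_of_isNilpotent (hS _ had) hrange))

theorem exists_invariant_ne_bot_ne_top (hS : ∀ f ∈ S, IsNilpotent f) (hS0 : ∃ f ∈ S, f ≠ 0) :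
    ∃ W : Submodule K V, W ≠ ⊥ ∧ W ≠ ⊤ ∧ ∀ f ∈ S, W ≤ W.comap f := by
  let rk : End K V → ℕ := fun b => finrank K (LinearMap.range b)
  have hne : {b | b ∈ S ∧ b ≠ 0}.Nonempty := hS0
  obtain ⟨haS, ha0⟩ := Function.argminOn_mem rk _ hne
  set a := Function.argminOn rk _ hne
  have hmin : ∀ b ∈ S, b ≠ 0 → rk a ≤ rk b := fun b hb hb0 =>
    Function.argminOn_le rk {b | b ∈ S ∧ b ≠ 0} ⟨hb, hb0⟩
  have haa : a * a = 0 := by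
    simpa using mul_mul_eq_zero_of_finrank_range_le hS ha0 hmin (d := 1)
      (by simpa using haS) (by simpa using S.mul_mem haS haS)
  have hasa : ∀ s ∈ S, a * s * a = 0 := fun s hs =>
    mul_mul_eq_zero_of_finrank_range_le hS ha0 hmin (S.mul_mem haS hs)
      (S.mul_mem (S.mul_mem haS hs) haS)
  set W : Submodule K V := LinearMap.ker a ⊓ ⨅ s ∈ S, LinearMap.ker (a * s)
  have hmem : ∀ v, v ∈ W ↔ a v = 0 ∧ ∀ s ∈ S, a (s v) = 0 := by
    simp [W, Submodule.mem_iInf]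
  refine ⟨W, ?_, ?_, ?_⟩
  · intro hW
    apply ha0
    ext v
    have : a v ∈ W := (hmem _).2 ⟨by simp [← End.mul_apply, haa],
      fun s hs => by simp [← End.mul_apply, ← mul_assoc, hasa s hs]⟩
    simpa [hW] using this
  · intro hW
    apply ha0
    ext v
    exact ((hmem v).1 (hW ▸ Submodule.mem_top)).1
  · intro f hf v hv
    rw [Submodule.mem_comap, hmem]
    rw [hmem] at hv
    exact ⟨hv.2 f hf, fun s hs => hv.2 _ (S.mul_mem hs hf)⟩

theorem exists_ne_zero_forall_apply_eq_zero [Nontrivial V] (hS : ∀ f ∈ S, IsNilpotent f) :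
    ∃ v : V, v ≠ 0 ∧ ∀ f ∈ S, f v = 0 := by
  induction hd : finrank K V using Nat.strong_induction_on generalizing V with
  | _ d ih =>
    by_cases hS0 : ∃ f ∈ S, f ≠ 0
    · obtain ⟨W, hW0, hWtop, hW⟩ := exists_invariant_ne_bot_ne_top hS hS0
      have : Nontrivial W := Submodule.nontrivial_iff_ne_bot.mpr hW0
      obtain ⟨w, hw0, hw⟩ := ih _ (hd ▸ Submodule.finrank_lt hWtop)
        (isNilpotent_of_mem_restrictEnd W hW hS) rfl
      refine ⟨w, by simpa using hw0, fun f hf => ?_⟩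
      simpa using congrArg Subtype.val (hw _ ⟨f, hf, rfl⟩)
    · push Not at hS0
      obtain ⟨v, hv⟩ := exists_ne (0 : V)
      exact ⟨v, hv, fun f hf => by simp [hS0 f hf]⟩

theorem jointKer_pow_lt_succ (hS : ∀ f ∈ S, IsNilpotent f) {j : ℕ}
    (hj : jointKer ((S : Set (End K V)) ^ j) ≠ ⊤) :
    jointKer ((S : Set (End K V)) ^ j) < jointKer ((S : Set (End K V)) ^ (j + 1)) := by
  set C := jointKer ((S : Set (End K V)) ^ j)
  have hC : ∀ f ∈ S, C ≤ C.comap f := fun f hf v hv =>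
    mem_jointKer_pow_succ.mp (jointKer_pow_le_succ _ j hv) f hf
  have : Nontrivial (V ⧸ C) := Submodule.Quotient.nontrivial_iff.mpr hj
  obtain ⟨q, hq0, hq⟩ :=
    exists_ne_zero_forall_apply_eq_zero (isNilpotent_of_mem_mapQEnd C hC hS)
  obtain ⟨v, rfl⟩ := C.mkQ_surjective q
  refine SetLike.lt_iff_le_and_exists.mpr ⟨jointKer_pow_le_succ _ j, v, ?_, ?_⟩
  · refine mem_jointKer_pow_succ.mpr fun f hf => ?_
    simpa [Submodule.Quotient.mk_eq_zero] using hq _ ⟨f, hf, rfl⟩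
  · simpa [Submodule.Quotient.mk_eq_zero] using hq0

theorem jointKer_pow_finrank (hS : ∀ f ∈ S, IsNilpotent f) :
    jointKer ((S : Set (End K V)) ^ finrank K V) = ⊤ := by
  have hgrow : ∀ j, min j (finrank K V) ≤ finrank K (jointKer ((S : Set (End K V)) ^ j)) := by
    intro j
    induction j with
    | zero => simp
    | succ j ih =>
      by_cases hj : jointKer ((S : Set (End K V)) ^ j) = ⊤
      · have htop : jointKer ((S : Set (End K V)) ^ (j + 1)) = ⊤ :=
          eq_top_iff.mpr (hj ▸ jointKer_pow_le_succ _ j)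
        rw [htop, finrank_top]
        exact min_le_right _ _
      · have := Submodule.finrank_lt_finrank_of_lt (jointKer_pow_lt_succ hS hj)
        omega
  exact Submodule.eq_top_of_finrank_eq
    (le_antisymm (Submodule.finrank_le _) (by simpa using hgrow (finrank K V)))

theorem eq_zero_of_mem_pow_finrank (hS : ∀ f ∈ S, IsNilpotent f) {g : End K V}
    (hg : g ∈ (S : Set (End K V)) ^ finrank K V) : g = 0 := by
  ext v
  exact mem_jointKer.mp (jointKer_pow_finrank hS ▸ Submodule.mem_top) g hg

end Subsemigroup

/-- Any nil subring `N` of the `n×n` matrix algebra over a field is nilpotent of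
nilpotence index at most `n`: the product of any `n` elements of `N` is `0`. -/
theorem stmt_7 (K : Type*) [Field K] (n : ℕ)
    (N : NonUnitalSubring (Matrix (Fin n) (Fin n) K))
    (hnil : ∀ a ∈ N, IsNilpotent a) :
    ∀ f : Fin n → Matrix (Fin n) (Fin n) K, (∀ i, f i ∈ N) → (List.ofFn f).prod = 0 := by
  intro f hf
  let e := Matrix.toLinAlgEquiv' (R := K) (n := Fin n)
  let S := N.toSubsemigroup.map (e : Matrix (Fin n) (Fin n) K →ₙ* End K (Fin n → K))
  have hS : ∀ g ∈ S, IsNilpotent g := by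
    rintro _ ⟨a, ha, rfl⟩
    exact (hnil a ha).map e
  have himage : e (List.ofFn f).prod ∈ (S : Set (End K (Fin n → K))) ^ finrank K (Fin n → K) := by
    rw [finrank_fin_fun]
    refine Set.mem_pow.mpr ⟨fun i => ⟨e (f i), f i, hf i, rfl⟩, ?_⟩
    rw [map_list_prod, List.map_ofFn]
    rfl
  exact e.map_eq_zero_iff.mp (Subsemigroup.eq_zero_of_mem_pow_finrank hS himage)
end

section
/- Let f(x₁,…,x_{n+1}) be a polynomial multilinear in x₁,…,x_{n+1} and alternating in x₁,…,x_n. Define f̃(x₁,…,x_{n+1}) = Σ_{k=1}^{n+1} (−1)^{k−1} f(x₁,…,x_{k−1},x_{k+1},…,x_{n+1},x_k). Then f̃ is alternating in all n+1 variables x₁,…,x_{n+1}. -/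
open Finset

/-- The polynomial `f̃(x₁,…,x_{n+1}) = Σ_{k=1}^{n+1} (−1)^{k−1}
f(x₁,…,x_{k−1},x_{k+1},…,x_{n+1},x_k)` associated to a multilinear `f`, modeled as a
multilinear map: the `k`-th summand feeds the arguments with `x_k` removed (in order),
followed by `x_k` in the last slot. -/
noncomputable def fTilde {C : Type*} [CommRing C] {A : Type*} [Ring A] [Algebra C A]
    {n : ℕ} (f : MultilinearMap C (fun _ : Fin (n + 1) => A) A) (v : Fin (n + 1) → A) : A :=
  ∑ k : Fin (n + 1), (-1 : ℤ) ^ (k : ℕ) •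
    f (fun t => if h : (t : ℕ) < n then v (k.succAbove ⟨t, h⟩) else v k)

/-! An adjacent transposition τ = (i i+1) permutes the summands of `f̃`: it exchanges the
summands for `k = i` and `k = i + 1`, whose signs are opposite, and for every other `k` it acts
on the first `n` arguments of `f`, where `f` is alternating. Hence `f̃ ∘ τ = -f̃`, and since
adjacent transpositions generate the symmetric group, `f̃ (v ∘ σ) = sign σ • f̃ v` for all `σ`. -/

namespace Fin

variable {α : Type*} {n : ℕ}

theorem swap_castSucc_succ_comp_succAbove (i : Fin n) :
    Equiv.swap i.castSucc i.succ ∘ i.castSucc.succAbove = i.succ.succAbove := by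
  funext p
  ext
  simp only [Function.comp_apply, Equiv.swap_apply_def, succAbove, Fin.ext_iff, Fin.lt_def,
    val_castSucc, val_succ]
  split_ifs <;> simp_all <;> omega

theorem removeNth_comp_swap_succAbove (k : Fin (n + 1)) (v : Fin (n + 1) → α) (p q : Fin n) :
    k.removeNth (v ∘ Equiv.swap (k.succAbove p) (k.succAbove q)) =
      k.removeNth v ∘ Equiv.swap p q := by
  funext t
  simp [removeNth, succAbove_right_injective.swap_apply]

theorem snoc_comp_swap (w : Fin n → α) (a : α) (p q : Fin n) :
    (snoc (w ∘ Equiv.swap p q) a : Fin (n + 1) → α) =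
      (snoc w a : Fin (n + 1) → α) ∘ Equiv.swap p.castSucc q.castSucc := by
  funext t
  induction t using lastCases with
  | last =>
    simp [Equiv.swap_apply_of_ne_of_ne (castSucc_lt_last p).ne' (castSucc_lt_last q).ne']
  | cast t => simp [(castSucc_injective n).swap_apply]

def moveToLast (k : Fin (n + 1)) (v : Fin (n + 1) → α) : Fin (n + 1) → α :=
  snoc (k.removeNth v) (v k)

theorem moveToLast_comp_swap_of_ne {i j k : Fin (n + 1)} (hij : i ≠ j) (hki : k ≠ i)
    (hkj : k ≠ j) (v : Fin (n + 1) → α) :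
    ∃ p q : Fin n, p ≠ q ∧
      moveToLast k (v ∘ Equiv.swap i j) = moveToLast k v ∘ Equiv.swap p.castSucc q.castSucc := by
  obtain ⟨p, rfl⟩ := exists_succAbove_eq hki.symm
  obtain ⟨q, rfl⟩ := exists_succAbove_eq hkj.symm
  refine ⟨p, q, fun h => hij (h ▸ rfl), ?_⟩
  rw [moveToLast, moveToLast, removeNth_comp_swap_succAbove, Function.comp_apply,
    Equiv.swap_apply_of_ne_of_ne hki hkj, snoc_comp_swap]

theorem moveToLast_castSucc_comp_swap (i : Fin n) (v : Fin (n + 1) → α) :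
    moveToLast i.castSucc (v ∘ Equiv.swap i.castSucc i.succ) = moveToLast i.succ v := by
  rw [moveToLast, moveToLast, Function.comp_apply, Equiv.swap_apply_left]
  congr 1
  exact congrArg (v ∘ ·) (swap_castSucc_succ_comp_succAbove i)

theorem moveToLast_succ_comp_swap (i : Fin n) (v : Fin (n + 1) → α) :
    moveToLast i.succ (v ∘ Equiv.swap i.castSucc i.succ) = moveToLast i.castSucc v := by
  have h := moveToLast_castSucc_comp_swap i (v ∘ Equiv.swap i.castSucc i.succ)
  rwa [Function.comp_assoc, ← Equiv.Perm.coe_mul, Equiv.swap_mul_self, Equiv.Perm.coe_one,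
    Function.comp_id, eq_comm] at h

end Fin

section AlternatizeLast

open Fin

variable {α M : Type*} [AddCommGroup M] {n : ℕ}

theorem map_comp_perm_of_map_comp_swap_castSucc_succ {F : (Fin (n + 1) → α) → M}
    (hF : ∀ v (i : Fin n), F (v ∘ Equiv.swap i.castSucc i.succ) = -F v)
    (σ : Equiv.Perm (Fin (n + 1))) (v : Fin (n + 1) → α) :
    F (v ∘ σ) = (Equiv.Perm.sign σ : ℤ) • F v := by
  have hσ : σ ∈ Submonoid.closure (Set.range fun i : Fin n ↦ Equiv.swap i.castSucc i.succ) := by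
    rw [Equiv.Perm.mclosure_swap_castSucc_succ]; trivial
  induction hσ using Submonoid.closure_induction generalizing v with
  | mem τ hτ =>
    obtain ⟨i, rfl⟩ := hτ
    rw [hF, Equiv.Perm.sign_swap (castSucc_lt_succ (i := i)).ne]
    simp
  | one => simp
  | mul σ τ _ _ ihσ ihτ =>
    rw [Equiv.Perm.coe_mul, ← Function.comp_assoc, ihτ, ihσ, smul_smul, map_mul, Units.val_mul,
      mul_comm]

def alternatizeLast (F : (Fin (n + 1) → α) → M) (v : Fin (n + 1) → α) : M :=
  ∑ k : Fin (n + 1), (-1 : ℤ) ^ (k : ℕ) • F (moveToLast k v)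

theorem alternatizeLast_comp_swap_castSucc_succ {F : (Fin (n + 1) → α) → M}
    (hF : ∀ v (p q : Fin n), p ≠ q → F (v ∘ Equiv.swap p.castSucc q.castSucc) = -F v)
    (v : Fin (n + 1) → α) (i : Fin n) :
    alternatizeLast F (v ∘ Equiv.swap i.castSucc i.succ) = -alternatizeLast F v := by
  set τ := Equiv.swap i.castSucc i.succ
  have hterm : ∀ k : Fin (n + 1), (-1 : ℤ) ^ (k : ℕ) • F (moveToLast k (v ∘ τ)) =
      -((-1 : ℤ) ^ (τ k : ℕ) • F (moveToLast (τ k) v)) := by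
    intro k
    rcases eq_or_ne k i.castSucc with rfl | hk₁
    · simp [τ, moveToLast_castSucc_comp_swap, pow_succ]
    rcases eq_or_ne k i.succ with rfl | hk₂
    · simp [τ, moveToLast_succ_comp_swap, pow_succ]
    obtain ⟨p, q, hpq, hmove⟩ :=
      moveToLast_comp_swap_of_ne (castSucc_lt_succ (i := i)).ne hk₁ hk₂ v
    rw [Equiv.swap_apply_of_ne_of_ne hk₁ hk₂, hmove, hF _ p q hpq, smul_neg]
  rw [alternatizeLast, alternatizeLast, Finset.sum_congr rfl fun k _ ↦ hterm k,
    Finset.sum_neg_distrib, Equiv.sum_comp τ fun k ↦ (-1 : ℤ) ^ (k : ℕ) • F (moveToLast k v)]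

end AlternatizeLast

theorem fTilde_eq_alternatizeLast {C : Type*} [CommRing C] {A : Type*} [Ring A] [Algebra C A]
    {n : ℕ} (f : MultilinearMap C (fun _ : Fin (n + 1) => A) A) :
    fTilde f = alternatizeLast f := by
  funext v
  refine Finset.sum_congr rfl fun k _ ↦ congrArg _ (congrArg f (funext fun t ↦ ?_))
  induction t using Fin.lastCases with
  | last => simp [Fin.moveToLast]
  | cast t => simp [Fin.moveToLast, Fin.removeNth]

/-- Let `f(x₁,…,x_{n+1})` be multilinear in `x₁,…,x_{n+1}` and alternating in `x₁,…,x_n`.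
Then `f̃(x₁,…,x_{n+1}) = Σ_{k=1}^{n+1} (−1)^{k−1} f(x₁,…,x_{k−1},x_{k+1},…,x_{n+1},x_k)`
is alternating in all `n+1` variables `x₁,…,x_{n+1}`. -/
theorem stmt_13 (C : Type*) [CommRing C] (A : Type*) [Ring A] [Algebra C A] (n : ℕ)
    (f : MultilinearMap C (fun _ : Fin (n + 1) => A) A)
    (halt : ∀ (v : Fin (n + 1) → A) (i j : Fin (n + 1)), i ≠ j →
      (i : ℕ) < n → (j : ℕ) < n → f (v ∘ Equiv.swap i j) + f v = 0) :
    ∀ (v : Fin (n + 1) → A) (i j : Fin (n + 1)), i ≠ j →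
      fTilde f (v ∘ Equiv.swap i j) + fTilde f v = 0 := by
  intro v i j hij
  have hf : ∀ (w : Fin (n + 1) → A) (p q : Fin n), p ≠ q →
      f (w ∘ Equiv.swap p.castSucc q.castSucc) = -f w := fun w p q hpq ↦
    eq_neg_of_add_eq_zero_left (halt w _ _ ((Fin.castSucc_injective n).ne hpq) p.isLt q.isLt)
  rw [fTilde_eq_alternatizeLast, map_comp_perm_of_map_comp_swap_castSucc_succ
    (alternatizeLast_comp_swap_castSucc_succ hf), Equiv.Perm.sign_swap hij]
  simp
end

section
/- Let A be a C-algebra in which every element a satisfies a monic polynomial equation of degree n over C (with constant and lower coefficients in C). Then Obst_n(A) := A ∩ I_{n,A} = 0, where I_{n,A} is the ideal of A[ξ_{n,A}] generated by all elements a^n + ξ_{1,a}a^{n−1} + ⋯ + ξ_{n,a} for a ∈ A. -/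
open Finset

/-- The polynomial extension `A[ξ_{n,A}]` of `A` by central commuting indeterminates
`ξ_{i,a}` (`1 ≤ i ≤ n`, `a ∈ A`), realized as the monoid algebra of `A` over the free
commutative monoid on `Fin n × A`. -/
abbrev XiRing (A : Type*) [Ring A] (n : ℕ) : Type _ :=
  AddMonoidAlgebra A ((Fin n × A) →₀ ℕ)

/-- The indeterminate `ξ_{i,a}` in `A[ξ_{n,A}]`. -/
noncomputable def xi {A : Type*} [Ring A] {n : ℕ} (i : Fin n) (a : A) : XiRing A n :=
  AddMonoidAlgebra.single (Finsupp.single (i, a) 1) 1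

/-- The canonical embedding `A → A[ξ_{n,A}]`. -/
noncomputable def embA {A : Type*} [Ring A] (n : ℕ) : A →+* XiRing A n :=
  AddMonoidAlgebra.singleZeroRingHom

/-- The two-sided ideal `I_{n,A} ⊆ A[ξ_{n,A}]` generated by the elements
`a^n + ξ_{1,a} a^{n−1} + ⋯ + ξ_{n,a}` for `a ∈ A` (here `ξ_{i+1,a}` carries the
exponent `n−1−i`, so the last one is the constant term). -/
noncomputable def IdealI (A : Type*) [Ring A] (n : ℕ) : TwoSidedIdeal (XiRing A n) :=
  TwoSidedIdeal.span {r : XiRing A n | ∃ a : A,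
    r = embA n (a ^ n) + ∑ i : Fin n, xi i a * embA n (a ^ (n - 1 - (i : ℕ)))}

section Aux

variable {C : Type*} [CommRing C] {A : Type*} [Ring A] [Algebra C A] {n : ℕ}

/-- The central value assigned to the indeterminate `ξ_{i,a}`, given a choice of
coefficients. -/
noncomputable def ccVal (c : A → Fin n → C) (p : Fin n × A) : Subring.center A :=
  ⟨algebraMap C A (c p.2 p.1), Subring.mem_center_iff.mpr fun g => (Algebra.commutes _ g).symm⟩

/-- The monoid homomorphism from the free commutative monoid on `Fin n × A` to the
center of `A` sending `ξ_{i,a}` to `algebraMap C A (c a i)`. -/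
noncomputable def gCenter (c : A → Fin n → C) :
    Multiplicative ((Fin n × A) →₀ ℕ) →* Subring.center A where
  toFun m := (Multiplicative.toAdd m).prod fun p k => (ccVal c p) ^ k
  map_one' := by simp
  map_mul' x y := by
    simpa using Finsupp.prod_add_index' (by simp) (fun p k₁ k₂ => pow_add _ k₁ k₂)

/-- The evaluation ring homomorphism `A[ξ_{n,A}] → A` sending `a ↦ a` and
`ξ_{i,a} ↦ algebraMap C A (c a i)`. -/
noncomputable def evalHom (c : A → Fin n → C) : XiRing A n →+* A :=
  AddMonoidAlgebra.liftNCRingHom (RingHom.id A)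
    ((Subring.center A).subtype.toMonoidHom.comp (gCenter c))
    (fun x y => Subring.mem_center_iff.mp ((gCenter c y).2) x)

lemma evalHom_embA (c : A → Fin n → C) (a : A) : evalHom c (embA n a) = a := by
  show AddMonoidAlgebra.liftNC _ _ (AddMonoidAlgebra.single 0 a) = a
  rw [AddMonoidAlgebra.liftNC_single]
  simp [gCenter]

lemma evalHom_xi (c : A → Fin n → C) (i : Fin n) (a : A) :
    evalHom c (xi i a) = algebraMap C A (c a i) := by
  show AddMonoidAlgebra.liftNC _ _ (AddMonoidAlgebra.single _ (1 : A)) = _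
  rw [AddMonoidAlgebra.liftNC_single]
  simp only [AddMonoidHom.coe_coe, RingHom.id_apply, one_mul]
  show ((gCenter c (Multiplicative.ofAdd _) : Subring.center A) : A) = _
  show ((Finsupp.prod _ _ : Subring.center A) : A) = _
  rw [toAdd_ofAdd]
  rw [Finsupp.prod_single_index (h := fun p k => ccVal c p ^ k) (pow_zero _)]
  simp [ccVal]

end Aux

/-- If every element `a` of the `C`-algebra `A` is `n`-integral over `C` (it satisfies a
monic degree-`n` equation with lower coefficients from `C`), then the obstruction to
integrality `Obst_n(A) = A ∩ I_{n,A}` is zero. -/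
theorem stmt_14 (C : Type*) [CommRing C] (A : Type*) [Ring A] [Algebra C A] (n : ℕ)
    (hint : ∀ a : A, ∃ c : Fin n → C,
      a ^ n + ∑ i : Fin n, algebraMap C A (c i) * a ^ (n - 1 - (i : ℕ)) = 0) :
    ∀ a : A, embA n a ∈ IdealI A n → a = 0 := by
  intro a ha
  set c : A → Fin n → C := fun a => (hint a).choose with hc
  have hker : embA n a ∈ TwoSidedIdeal.ker (evalHom c) := by
    refine TwoSidedIdeal.mem_span_iff.mp ha _ ?_
    rintro r ⟨b, rfl⟩
    rw [SetLike.mem_coe, TwoSidedIdeal.mem_ker]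
    have := (hint b).choose_spec
    simp only [map_add, map_sum, map_mul, evalHom_embA, evalHom_xi, map_pow]
    exact this
  rw [TwoSidedIdeal.mem_ker, evalHom_embA] at hker
  exact hker
end

section
/- Let μ be a partition of n with hook numbers h_x, and let f^μ = n!/∏_{x∈μ} h_x be the number of standard Young tableaux of shape μ. If the sum of the hook numbers satisfies Σ_{x∈μ} h_x ≤ S, then (n/e)^n · (n/S)^n < f^μ; in particular for the u×v rectangle μ = (u^v) with n = uv, one has (n/(u+v))^n · (2/e)^n < f^μ. -/
open Finset

/-- The hook number of the box `(i, j)` of a Young diagram `μ`: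
the boxes to its right in its row, the boxes below it in its column, plus the box itself. -/
def hookLength (μ : YoungDiagram) (i j : ℕ) : ℕ :=
  (μ.rowLen i - j) + (μ.colLen j - i) - 1

/-! By AM–GM, `∏ h_x ≤ (Σ h_x / n) ^ n ≤ (S / n) ^ n`, while Stirling's lower bound
`√(2πn) (n/e)^n ≤ n!` gives `(n/e)^n < n!`; dividing the two yields the general bound.
In the `u × v` rectangle the hook of `(i, j)` is `(u-1-j) + (v-1-i) + 1`, so Gauss' formula
gives `Σ h_x = n(u+v)/2`, and the general bound with `S = Σ h_x` is the rectangle bound. -/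

open Real

theorem Real.prod_le_sum_div_card_pow {ι : Type*} (s : Finset ι) (z : ι → ℝ)
    (hz : ∀ i ∈ s, 0 ≤ z i) : ∏ i ∈ s, z i ≤ ((∑ i ∈ s, z i) / #s) ^ #s := by
  rcases s.eq_empty_or_nonempty with rfl | hs
  · simp
  have hcard : (#s : ℝ) ≠ 0 := Nat.cast_ne_zero.mpr hs.card_pos.ne'
  have amgm := geom_mean_le_arith_mean_weighted s (fun _ ↦ (#s : ℝ)⁻¹) z
    (fun _ _ ↦ by positivity) (by simp [hcard]) hz
  rw [finsetProd_rpow s z hz, ← Finset.mul_sum, inv_mul_eq_div] at amgm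
  have hprod : 0 ≤ ∏ i ∈ s, z i := prod_nonneg hz
  calc ∏ i ∈ s, z i = ((∏ i ∈ s, z i) ^ (#s : ℝ)⁻¹) ^ #s := by
        rw [← rpow_natCast, ← rpow_mul hprod, inv_mul_cancel₀ hcard, rpow_one]
    _ ≤ ((∑ i ∈ s, z i) / #s) ^ #s := by gcongr

theorem Real.div_exp_one_pow_lt_factorial {n : ℕ} (hn : 0 < n) :
    ((n : ℝ) / exp 1) ^ n < n.factorial := by
  have hsqrt : 1 < √(2 * π * n) := by
    rw [lt_sqrt zero_le_one, one_pow]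
    have : (1 : ℝ) ≤ n := by exact_mod_cast hn
    nlinarith [pi_gt_three]
  calc ((n : ℝ) / exp 1) ^ n < √(2 * π * n) * (n / exp 1) ^ n :=
        lt_mul_of_one_lt_left (by positivity) hsqrt
    _ ≤ n.factorial := Stirling.le_factorial_stirling n

theorem div_exp_one_pow_mul_div_pow_lt_factorial_div_prod {ι : Type*} {s : Finset ι}
    (hs : s.Nonempty) {h : ι → ℝ} (hpos : ∀ i ∈ s, 0 < h i) {S : ℝ}
    (hS : ∑ i ∈ s, h i ≤ S) :
    ((#s : ℝ) / exp 1) ^ #s * (#s / S) ^ #s < (#s).factorial / ∏ i ∈ s, h i := by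
  have hn : (0 : ℝ) < #s := Nat.cast_pos.mpr hs.card_pos
  have hS_pos : 0 < S := (sum_pos hpos hs).trans_le hS
  have hprod : ∏ i ∈ s, h i ≤ (S / #s) ^ #s := by
    refine (Real.prod_le_sum_div_card_pow s h fun i hi ↦ (hpos i hi).le).trans ?_
    have hsum_nonneg : 0 ≤ ∑ i ∈ s, h i := (sum_pos hpos hs).le
    gcongr
  rw [lt_div_iff₀ (prod_pos hpos)]
  calc ((#s : ℝ) / exp 1) ^ #s * (#s / S) ^ #s * ∏ i ∈ s, h i
      ≤ ((#s : ℝ) / exp 1) ^ #s * (#s / S) ^ #s * (S / #s) ^ #s := by gcongr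
    _ = ((#s : ℝ) / exp 1) ^ #s := by
      rw [mul_assoc, ← mul_pow, div_mul_div_cancel₀ hS_pos.ne', div_self hn.ne', one_pow,
        mul_one]
    _ < (#s).factorial := Real.div_exp_one_pow_lt_factorial hs.card_pos

theorem hookLength_pos {μ : YoungDiagram} {c : ℕ × ℕ} (hc : c ∈ μ.cells) :
    0 < hookLength μ c.1 c.2 := by
  have hrow := YoungDiagram.mem_iff_lt_rowLen.mp ((YoungDiagram.mem_cells _).mp hc)
  have hcol := YoungDiagram.mem_iff_lt_colLen.mp ((YoungDiagram.mem_cells _).mp hc)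
  unfold hookLength
  omega

section Rectangle

variable {μ : YoungDiagram} {u v : ℕ}

theorem YoungDiagram.rowLen_eq_of_cells_eq_rectangle (hμ : μ.cells = range v ×ˢ range u)
    {i : ℕ} (hi : i < v) : μ.rowLen i = u :=
  eq_of_forall_lt_iff fun j ↦ by
    rw [← YoungDiagram.mem_iff_lt_rowLen, ← YoungDiagram.mem_cells, hμ]
    simp [hi]

theorem YoungDiagram.colLen_eq_of_cells_eq_rectangle (hμ : μ.cells = range v ×ˢ range u)
    {j : ℕ} (hj : j < u) : μ.colLen j = v :=
  eq_of_forall_lt_iff fun i ↦ by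
    rw [← YoungDiagram.mem_iff_lt_colLen, ← YoungDiagram.mem_cells, hμ]
    simp [hj]

theorem sum_hookLength_mul_two_of_cells_eq_rectangle (hμ : μ.cells = range v ×ˢ range u) :
    (∑ c ∈ μ.cells, hookLength μ c.1 c.2) * 2 = u * v * (u + v) := by
  have hook : ∀ c ∈ range v ×ˢ range u,
      hookLength μ c.1 c.2 = (u - 1 - c.2) + (v - 1 - c.1) + 1 := by
    intro c hc
    obtain ⟨hi, hj⟩ := mem_product.mp hc
    rw [mem_range] at hi hj
    rw [hookLength, μ.rowLen_eq_of_cells_eq_rectangle hμ hi,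
      μ.colLen_eq_of_cells_eq_rectangle hμ hj]
    omega
  rw [hμ, sum_congr rfl hook, sum_product]
  simp only [sum_add_distrib, sum_const, card_range, smul_eq_mul, mul_one]
  have gauss (m : ℕ) : (∑ j ∈ range m, (m - 1 - j)) * 2 = m * (m - 1) := by
    rw [sum_range_reflect (fun j ↦ j) m, sum_range_id_mul_two]
  rw [← mul_sum, add_mul, add_mul, mul_assoc, mul_assoc, gauss, gauss]
  obtain _ | u := u
  · simp
  obtain _ | v := v
  · simp
  simp only [Nat.add_sub_cancel]
  ring

end Rectangle

/-- Let `μ` be a partition of `n` (a Young diagram with `n` boxes, `n ≥ 1`) with hook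
numbers `h_x`, and let `f^μ = n!/∏_{x∈μ} h_x` be the number of standard Young tableaux of
shape `μ`.  If `Σ_{x∈μ} h_x ≤ S`, then `(n/e)^n · (n/S)^n < f^μ`.  In particular, for the
`u×v` rectangle `μ = (u^v)` with `n = uv`, one has `(n/(u+v))^n · (2/e)^n < f^μ`. -/
theorem stmt_19 (μ : YoungDiagram) (n : ℕ) (hn : 0 < n) (hcard : μ.cells.card = n) :
    (∀ S : ℕ, (∑ c ∈ μ.cells, hookLength μ c.1 c.2) ≤ S →
      ((n : ℝ) / Real.exp 1) ^ n * ((n : ℝ) / (S : ℝ)) ^ n <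
        (n.factorial : ℝ) / ∏ c ∈ μ.cells, (hookLength μ c.1 c.2 : ℝ)) ∧
    (∀ u v : ℕ, 0 < u → 0 < v → n = u * v →
      μ.cells = Finset.range v ×ˢ Finset.range u →
      ((n : ℝ) / ((u : ℝ) + (v : ℝ))) ^ n * (2 / Real.exp 1) ^ n <
        (n.factorial : ℝ) / ∏ c ∈ μ.cells, (hookLength μ c.1 c.2 : ℝ)) := by
  have hμ : μ.cells.Nonempty := card_pos.mp (hcard ▸ hn)
  have hook_bound (S : ℕ) (hS : ∑ c ∈ μ.cells, hookLength μ c.1 c.2 ≤ S) :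
      ((n : ℝ) / exp 1) ^ n * ((n : ℝ) / S) ^ n <
        (n.factorial : ℝ) / ∏ c ∈ μ.cells, (hookLength μ c.1 c.2 : ℝ) := by
    subst hcard
    exact div_exp_one_pow_mul_div_pow_lt_factorial_div_prod hμ
      (fun c hc ↦ Nat.cast_pos.mpr (hookLength_pos hc)) (by exact_mod_cast hS)
  refine ⟨hook_bound, fun u v hu hv hnuv hrect ↦ ?_⟩
  have hT : ((∑ c ∈ μ.cells, hookLength μ c.1 c.2 : ℕ) : ℝ) = u * v * (u + v) / 2 := by
    rw [eq_div_iff two_ne_zero]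
    exact_mod_cast sum_hookLength_mul_two_of_cells_eq_rectangle hrect
  have hu' : (0 : ℝ) < u := Nat.cast_pos.mpr hu
  have hv' : (0 : ℝ) < v := Nat.cast_pos.mpr hv
  convert hook_bound _ le_rfl using 1
  rw [← mul_pow, ← mul_pow, hT, hnuv, Nat.cast_mul]
  field_simp
end
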